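/- For κ = 7, with ⟨x⟩ = sin(πx/7)/sin(π/7) for real x, define for nonnegative integers λ1, λ2 the quantity qdimG2(λ1,λ2) = ⟨λ1+1⟩·⟨λ2/3+1/3⟩·⟨λ1+λ2/3+4/3⟩·⟨λ1+2λ2/3+5/3⟩·⟨λ1+λ2+2⟩·⟨2λ1+λ2+3⟩ / (⟨1/3⟩·⟨1⟩·⟨4/3⟩·⟨5/3⟩·⟨2⟩·⟨3⟩). Then the sum of qdimG2(λ1,λ2)² over all pairs of nonnegative integers (λ1,λ2) with 2λ1+λ2 ≤ 3 equals (21/2)(5+√21). -/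

import Mathlib

/-!
Since `21 = 3 · 7`, every `⟨x⟩` at altitude 7 with `x ∈ ℤ/3` is a ratio `[3x] / [3]` of
q-integers `[k]` at altitude 21, and these are Chebyshev polynomials in `t = [2] = 2 cos (π/21)`.
The number `t` is a root of the degree-6 minimal polynomial `m` of `2 cos (π/21)`, because
`2 cos (7π/21) = 1` reads `(t - 1) m(t) = 0`. Reducing modulo `m` shows that the six quantum
dimensions are `1, d, d + 2, d, d, d + 1` with `d² = 3d + 3`, so `d = (3 + √21)/2` and the
global dimension is `5d² + 6d + 6 = 21 (d + 1)`.
-/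

/-- The q-number at altitude `κ`: `⟨x⟩ = sin(πx/κ)/sin(π/κ)`. -/
noncomputable def qnum (κ x : ℝ) : ℝ := Real.sin (Real.pi * x / κ) / Real.sin (Real.pi / κ)

/-- The quantum Weyl dimension of the irreducible G2 representation of highest weight
`{λ1,λ2}` at altitude κ = 7 (level k = 3). -/
noncomputable def qdimG2 (lam1 lam2 : ℕ) : ℝ :=
    qnum 7 (lam1 + 1) * qnum 7 (lam2 / 3 + 1/3) * qnum 7 (lam1 + lam2 / 3 + 4/3) *
      qnum 7 (lam1 + 2 * lam2 / 3 + 5/3) * qnum 7 (lam1 + lam2 + 2) *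
      qnum 7 (2 * lam1 + lam2 + 3) /
    (qnum 7 (1/3) * qnum 7 1 * qnum 7 (4/3) * qnum 7 (5/3) * qnum 7 2 * qnum 7 3)

open Real

section QNumber

variable {κ : ℝ}

theorem sin_pi_div_pos (hκ : 1 < κ) : 0 < sin (π / κ) :=
  sin_pos_of_pos_of_lt_pi (div_pos pi_pos (by linarith)) (div_lt_self pi_pos hκ)

theorem qnum_one (h : sin (π / κ) ≠ 0) : qnum κ 1 = 1 := by
  simp [qnum, h]

theorem qnum_pos {x : ℝ} (hκ : 1 < κ) (hx₀ : 0 < x) (hxκ : x < κ) : 0 < qnum κ x := by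
  have hx : π * x / κ < π := by
    rw [div_lt_iff₀ (by linarith)]
    exact mul_lt_mul_of_pos_left hxκ pi_pos
  exact div_pos (sin_pos_of_pos_of_lt_pi (div_pos (mul_pos pi_pos hx₀) (by linarith)) hx)
    (sin_pi_div_pos hκ)

theorem qnum_add_one_add_qnum_sub_one (x : ℝ) :
    qnum κ (x + 1) + qnum κ (x - 1) = qnum κ 2 * qnum κ x := by
  rcases eq_or_ne (sin (π / κ)) 0 with h | h
  · simp [qnum, h]
  simp only [qnum, mul_add, mul_sub, add_div, sub_div, mul_one, sin_add, sin_sub,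
    show π * 2 / κ = 2 * (π / κ) by ring, sin_two_mul]
  field_simp
  ring

theorem qnum_add_one_sub_qnum_sub_one (h : sin (π / κ) ≠ 0) (x : ℝ) :
    qnum κ (x + 1) - qnum κ (x - 1) = 2 * cos (π * x / κ) := by
  simp only [qnum, mul_add, mul_sub, add_div, sub_div, mul_one, sin_add, sin_sub]
  field_simp
  ring

theorem qnum_mul_qnum_natCast (h : sin (π / κ) ≠ 0) (x : ℝ) {n : ℕ} (hn : n ≠ 0) :
    qnum κ x * qnum (n * κ) n = qnum (n * κ) (n * x) := by
  have hκ : κ ≠ 0 := by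
    rintro rfl
    simp at h
  have hn' : (n : ℝ) ≠ 0 := Nat.cast_ne_zero.mpr hn
  simp only [qnum]
  rw [show π * n / (n * κ) = π / κ by field_simp,
    show π * (n * x) / (n * κ) = π * x / κ by field_simp]
  field_simp

end QNumber

noncomputable def qint21 (k : ℕ) : ℝ := qnum 21 k

theorem qint21_pos {k : ℕ} (hk₀ : 0 < k) (hk : k < 21) : 0 < qint21 k :=
  qnum_pos (by norm_num) (by exact_mod_cast hk₀) (by exact_mod_cast hk)

theorem qint21_ne_zero {k : ℕ} (hk₀ : 0 < k) (hk : k < 21) : qint21 k ≠ 0 :=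
  (qint21_pos hk₀ hk).ne'

theorem qint21_one : qint21 1 = 1 := by
  simpa [qint21] using qnum_one (sin_pi_div_pos (κ := 21) (by norm_num)).ne'

theorem qint21_add_three (n : ℕ) :
    qint21 (n + 3) = qint21 2 * qint21 (n + 2) - qint21 (n + 1) := by
  have h := qnum_add_one_add_qnum_sub_one (κ := 21) (n + 2)
  rw [show (n : ℝ) + 2 + 1 = n + 3 by ring, show (n : ℝ) + 2 - 1 = n + 1 by ring] at h
  simp only [qint21]
  push_cast
  linear_combination h

theorem qint21_eight_sub_qint21_six : qint21 8 - qint21 6 = 1 := by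
  have h := qnum_add_one_sub_qnum_sub_one (sin_pi_div_pos (κ := 21) (by norm_num)).ne' 7
  rw [show π * 7 / 21 = π / 3 by ring, cos_pi_div_three] at h
  simp only [qint21]
  norm_num at h ⊢
  linarith

theorem qint21_two_minpoly :
    qint21 2 ^ 6 + qint21 2 ^ 5 - 6 * qint21 2 ^ 4 - 6 * qint21 2 ^ 3 + 8 * qint21 2 ^ 2
      + 8 * qint21 2 + 1 = 0 := by
  have h := qint21_eight_sub_qint21_six
  have h3 := qint21_pos (k := 3) (by norm_num) (by norm_num)
  simp only [qint21_add_three, zero_add, Nat.reduceAdd, qint21_one] at h h3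
  have ht : qint21 2 - 1 ≠ 0 := by
    intro ht
    rw [sub_eq_zero.mp ht] at h3
    norm_num at h3
  apply (mul_eq_zero.mp _).resolve_left ht
  linear_combination h

theorem qnum_seven_eq_div (x : ℝ) : qnum 7 x = qnum 21 (3 * x) / qint21 3 := by
  have h := qnum_mul_qnum_natCast (sin_pi_div_pos (κ := 7) (by norm_num)).ne' x (n := 3)
    (by norm_num)
  rw [eq_div_iff (qint21_ne_zero (by norm_num) (by norm_num)), qint21]
  norm_num at h ⊢
  exact h

theorem qdimG2_eq (a b : ℕ) : qdimG2 a b =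
    qint21 (3 * a + 3) * qint21 (b + 1) * qint21 (3 * a + b + 4) * qint21 (3 * a + 2 * b + 5) *
      qint21 (3 * a + 3 * b + 6) * qint21 (6 * a + 3 * b + 9) /
    (qint21 1 * qint21 3 * qint21 4 * qint21 5 * qint21 6 * qint21 9) := by
  have h3 := qint21_ne_zero (k := 3) (by norm_num) (by norm_num)
  simp only [qdimG2, qnum_seven_eq_div, qint21]
  push_cast
  field_simp
  ring_nf

theorem qdimG2_pos {a b : ℕ} (h : 2 * a + b ≤ 3) : 0 < qdimG2 a b := by
  rw [qdimG2_eq]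
  refine div_pos ?_ ?_ <;> apply_rules [qint21_pos, mul_pos] <;> omega

theorem qdimG2_zero_zero : qdimG2 0 0 = 1 := by
  rw [qdimG2_eq]
  norm_num
  field_simp [qint21_ne_zero]

theorem qdimG2_zero_one_sq : qdimG2 0 1 ^ 2 = 3 * qdimG2 0 1 + 3 := by
  rw [qdimG2_eq]
  norm_num
  field_simp [qint21_ne_zero]
  simp only [qint21_add_three, zero_add, Nat.reduceAdd, qint21_one]
  grind [qint21_two_minpoly]

theorem qdimG2_zero_one : qdimG2 0 1 = (3 + √21) / 2 := by
  have hsq := qdimG2_zero_one_sq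
  have hpos := qdimG2_pos (a := 0) (b := 1) (by norm_num)
  have h21 : √21 = 2 * qdimG2 0 1 - 3 := by
    rw [sqrt_eq_iff_mul_self_eq (by norm_num) (by nlinarith)]
    linear_combination -4 * hsq
  linarith

theorem qdimG2_zero_two : qdimG2 0 2 = qdimG2 0 1 + 2 := by
  rw [qdimG2_eq, qdimG2_eq]
  norm_num
  field_simp [qint21_ne_zero]
  simp only [qint21_add_three, zero_add, Nat.reduceAdd, qint21_one]
  grind [qint21_two_minpoly]

theorem qdimG2_zero_three : qdimG2 0 3 = qdimG2 0 1 := by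
  rw [qdimG2_eq, qdimG2_eq]
  norm_num
  field_simp [qint21_ne_zero]
  simp only [qint21_add_three, zero_add, Nat.reduceAdd, qint21_one]
  grind [qint21_two_minpoly]

theorem qdimG2_one_zero : qdimG2 1 0 = qdimG2 0 1 := by
  rw [qdimG2_eq, qdimG2_eq]
  norm_num
  field_simp [qint21_ne_zero]
  simp only [qint21_add_three, zero_add, Nat.reduceAdd, qint21_one]
  grind [qint21_two_minpoly]

theorem qdimG2_one_one : qdimG2 1 1 = qdimG2 0 1 + 1 := by
  rw [qdimG2_eq, qdimG2_eq]
  norm_num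
  field_simp [qint21_ne_zero]
  simp only [qint21_add_three, zero_add, Nat.reduceAdd, qint21_one]
  grind [qint21_two_minpoly]

/-- The global dimension of the fusion category `A₃(G₂)`: the sum of the squares of the
quantum dimensions of the six simple objects (weights with 2λ1+λ2 ≤ 3) is
`(21/2)(5+√21)`. -/
theorem global_dimension_A3_G2 :
    ∑ p ∈ (Finset.range 4 ×ˢ Finset.range 4).filter (fun p => 2 * p.1 + p.2 ≤ 3),
      (qdimG2 p.1 p.2)^2 = 21 / 2 * (5 + Real.sqrt 21) := by
  have hweights : (Finset.range 4 ×ˢ Finset.range 4).filter (fun p => 2 * p.1 + p.2 ≤ 3) =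
      {(0, 0), (0, 1), (0, 2), (0, 3), (1, 0), (1, 1)} := by decide
  rw [hweights, Finset.sum_insert (by decide), Finset.sum_insert (by decide),
    Finset.sum_insert (by decide), Finset.sum_insert (by decide), Finset.sum_insert (by decide),
    Finset.sum_singleton, qdimG2_zero_zero, qdimG2_zero_two, qdimG2_zero_three, qdimG2_one_zero,
    qdimG2_one_one, qdimG2_zero_one]
  linear_combination (5 / 4) * sq_sqrt (show (0 : ℝ) ≤ 21 by norm_num)
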